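/- For α ∈ (0,1), the weight coefficient 1 - ∑_{m=2}^{k+1} |a_m^{(α)}| of the current opinion decreases monotonically in k and converges to α as k → ∞. -/

import Mathlib

open Finset Filter Topology

/-- The Grünwald–Letnikov coefficient `a_k^{(α)} = (-1)^k * α(α-1)⋯(α-k+1)/k!`
(with `a_0 = 1`). -/
noncomputable def glCoeff (α : ℝ) (k : ℕ) : ℝ :=
  (-1) ^ k * (∏ i ∈ Finset.range k, (α - (i : ℝ))) / (Nat.factorial k : ℝ)

/-!
Since `a_m^{(α)} = (-1)^m (α choose m)`, Pascal's rule turns the partial sums of the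
coefficients into a single coefficient of exponent `α - 1`:
`∑_{m ≤ n} a_m^{(α)} = a_n^{(α-1)}`. For `α ∈ (0,1)` the sequence `a_n^{(α-1)}` is a product
of factors `1 - α/(i+1) ∈ (0,1)`, hence positive and decreasing, so `a_m^{(α)} ≤ 0` for `m ≥ 1`
and the weight equals `α + a_{k+1}^{(α-1)}`. Finally `a_n^{(α-1)} ≤ exp(-α H_n) → 0`.
-/

theorem glCoeff_zero (α : ℝ) : glCoeff α 0 = 1 := by
  simp [glCoeff]

theorem glCoeff_succ (α : ℝ) (n : ℕ) :
    glCoeff α (n + 1) = glCoeff α n * ((n - α) / (n + 1)) := by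
  simp only [glCoeff, prod_range_succ, pow_succ, Nat.factorial_succ]
  push_cast
  field_simp
  ring

theorem glCoeff_succ_eq_sub (α : ℝ) (n : ℕ) :
    glCoeff α (n + 1) = glCoeff (α - 1) (n + 1) - glCoeff (α - 1) n := by
  have hshift : ∏ i ∈ range (n + 1), (α - (i : ℝ)) = α * ∏ i ∈ range n, (α - 1 - (i : ℝ)) := by
    rw [prod_range_succ', mul_comm]
    simp only [Nat.cast_zero, sub_zero, Nat.cast_succ, sub_add_eq_sub_sub_swap]
  simp only [glCoeff, hshift, prod_range_succ, pow_succ, Nat.factorial_succ]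
  push_cast
  field_simp
  ring

theorem sum_range_succ_glCoeff (α : ℝ) (n : ℕ) :
    ∑ m ∈ range (n + 1), glCoeff α m = glCoeff (α - 1) n := by
  induction n with
  | zero => simp [glCoeff_zero]
  | succ n ih => rw [sum_range_succ, ih, glCoeff_succ_eq_sub]; ring

section NonposExponent

variable {β : ℝ}

theorem glCoeff_nonneg (hβ : β ≤ 0) (n : ℕ) : 0 ≤ glCoeff β n := by
  induction n with
  | zero => simp [glCoeff_zero]
  | succ n ih =>
    rw [glCoeff_succ]
    have : 0 ≤ (n : ℝ) - β := by linarith [n.cast_nonneg (α := ℝ)]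
    positivity

theorem glCoeff_antitone (hβ₁ : -1 ≤ β) (hβ₀ : β ≤ 0) : Antitone (glCoeff β) := by
  refine antitone_nat_of_succ_le fun n => ?_
  have hfactor : ((n : ℝ) - β) / (n + 1) ≤ 1 := by
    rw [div_le_one (by positivity)]
    linarith
  rw [glCoeff_succ]
  exact mul_le_of_le_one_right (glCoeff_nonneg hβ₀ n) hfactor

theorem glCoeff_le_exp (hβ : β ≤ 0) (n : ℕ) :
    glCoeff β n ≤ Real.exp (-((1 + β) * ∑ i ∈ range n, 1 / ((i : ℝ) + 1))) := by
  induction n with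
  | zero => simp [glCoeff_zero]
  | succ n ih =>
    have hfactor : ((n : ℝ) - β) / (n + 1) ≤ Real.exp (-((1 + β) / (n + 1))) := by
      have : ((n : ℝ) - β) / (n + 1) = -((1 + β) / (n + 1)) + 1 := by field_simp; ring
      rw [this]
      exact Real.add_one_le_exp _
    have hfactor_nonneg : 0 ≤ ((n : ℝ) - β) / (n + 1) := by
      have : 0 ≤ (n : ℝ) - β := by linarith [n.cast_nonneg (α := ℝ)]
      positivity
    calc glCoeff β (n + 1) = glCoeff β n * ((n - β) / (n + 1)) := glCoeff_succ β n
      _ ≤ Real.exp (-((1 + β) * ∑ i ∈ range n, 1 / ((i : ℝ) + 1)))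
          * Real.exp (-((1 + β) / (n + 1))) :=
        mul_le_mul ih hfactor hfactor_nonneg (Real.exp_nonneg _)
      _ = Real.exp (-((1 + β) * ∑ i ∈ range (n + 1), 1 / ((i : ℝ) + 1))) := by
        rw [← Real.exp_add, sum_range_succ]
        ring_nf

theorem tendsto_glCoeff_zero (hβ₁ : -1 < β) (hβ₀ : β ≤ 0) :
    Tendsto (glCoeff β) atTop (𝓝 0) := by
  have hexp : Tendsto (fun n : ℕ => Real.exp (-((1 + β) * ∑ i ∈ range n, 1 / ((i : ℝ) + 1))))
      atTop (𝓝 0) :=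
    Real.tendsto_exp_atBot.comp <| tendsto_neg_atTop_atBot.comp <|
      Real.tendsto_sum_range_one_div_nat_succ_atTop.const_mul_atTop (by linarith)
  exact tendsto_of_tendsto_of_tendsto_of_le_of_le tendsto_const_nhds hexp
    (glCoeff_nonneg hβ₀) (glCoeff_le_exp hβ₀)

end NonposExponent

theorem glCoeff_succ_nonpos {α : ℝ} (hα₀ : 0 ≤ α) (hα₁ : α ≤ 1) (n : ℕ) :
    glCoeff α (n + 1) ≤ 0 := by
  rw [glCoeff_succ_eq_sub, sub_nonpos]
  exact glCoeff_antitone (by linarith) (by linarith) n.le_succ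

theorem one_sub_sum_Icc_abs_glCoeff {α : ℝ} (hα₀ : 0 ≤ α) (hα₁ : α ≤ 1) (k : ℕ) :
    1 - ∑ m ∈ Icc 2 (k + 1), |glCoeff α m| = α + glCoeff (α - 1) (k + 1) := by
  have habs : ∀ m ∈ Icc 2 (k + 1), |glCoeff α m| = -glCoeff α m := by
    intro m hm
    obtain ⟨n, rfl⟩ : ∃ n, m = n + 1 := ⟨m - 1, by grind⟩
    exact abs_of_nonpos (glCoeff_succ_nonpos hα₀ hα₁ n)
  have hsplit : ∑ m ∈ range (k + 1 + 1), glCoeff α m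
      = glCoeff α 0 + glCoeff α 1 + ∑ m ∈ Icc 2 (k + 1), glCoeff α m := by
    rw [range_eq_Ico, ← sum_Ico_consecutive _ (Nat.zero_le 2) (by omega : 2 ≤ k + 1 + 1),
      ← Ico_add_one_right_eq_Icc, ← range_eq_Ico]
    simp [sum_range_succ]
  have hone : glCoeff α 1 = -α := by simp [glCoeff]
  rw [sum_congr rfl habs, sum_neg_distrib, ← sum_range_succ_glCoeff, hsplit, glCoeff_zero, hone]
  ring

theorem weight_antitone_tendsto_alpha (α : ℝ) (hα : α ∈ Set.Ioo (0:ℝ) 1) :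
    (Antitone fun k : ℕ => 1 - ∑ m ∈ Finset.Icc 2 (k + 1), |glCoeff α m|) ∧
      Filter.Tendsto (fun k : ℕ => 1 - ∑ m ∈ Finset.Icc 2 (k + 1), |glCoeff α m|)
        Filter.atTop (nhds α) := by
  obtain ⟨hα₀, hα₁⟩ := hα
  simp only [one_sub_sum_Icc_abs_glCoeff hα₀.le hα₁.le]
  constructor
  · exact ((glCoeff_antitone (by linarith) (by linarith)).comp_monotone
      fun _ _ h => Nat.succ_le_succ h).const_add α
  · simpa using tendsto_const_nhds.add
      ((tendsto_glCoeff_zero (by linarith) (by linarith)).comp (tendsto_add_atTop_nat 1))
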